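/- arXiv:1910.08269 — 4 statements merged into one kernel-verified Lean document; each statement's English description precedes it below -/
import Mathlib

section
/- Let $f(x) = \alpha x^4 + \beta x^3 + a_1 x^2 + a_2 x + a_3$ and let $(x_i, y_i)$, $i = 1,2,3$, be points on $y^2 = f(x)$ with $x_1, x_2, x_3$ pairwise distinct, and let $V(x) = b_2 x^2 + b_1 x + b_0$ interpolate these points. Assume $\alpha \neq b_2^2$ and define $x_4 = -x_1 - x_2 - x_3 - \frac{\beta - 2 b_1 b_2}{\alpha - b_2^2}$ and $y_4 = -V(x_4)$. Then $(x_4, y_4)$ also lies on the curve, i.e. $y_4^2 = f(x_4)$. -/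
/-! The quartic `V² - f` vanishes at `x₁, x₂, x₃`. Subtracting `(b₂² - α) ∏ᵢ (x - xᵢ)`,
whose cubic coefficient agrees with that of `V² - f` exactly for the given `x₄` (Vieta),
leaves a polynomial of degree at most two with three distinct roots, hence zero. So `V² - f`
also vanishes at `x₄`. -/

theorem quadratic_coeffs_eq_zero_of_three_roots {R : Type*} [CommRing R] [IsDomain R]
    {a b c r₁ r₂ r₃ : R} (h₁₂ : r₁ ≠ r₂) (h₁₃ : r₁ ≠ r₃) (h₂₃ : r₂ ≠ r₃)
    (h₁ : a * r₁ ^ 2 + b * r₁ + c = 0) (h₂ : a * r₂ ^ 2 + b * r₂ + c = 0)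
    (h₃ : a * r₃ ^ 2 + b * r₃ + c = 0) :
    a = 0 ∧ b = 0 ∧ c = 0 := by
  have slope₁₂ : a * (r₁ + r₂) + b = 0 := by
    have h : (r₁ - r₂) * (a * (r₁ + r₂) + b) = 0 := by linear_combination h₁ - h₂
    exact (mul_eq_zero.mp h).resolve_left (sub_ne_zero_of_ne h₁₂)
  have slope₁₃ : a * (r₁ + r₃) + b = 0 := by
    have h : (r₁ - r₃) * (a * (r₁ + r₃) + b) = 0 := by linear_combination h₁ - h₃
    exact (mul_eq_zero.mp h).resolve_left (sub_ne_zero_of_ne h₁₃)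
  have ha : a = 0 := by
    have h : (r₂ - r₃) * a = 0 := by linear_combination slope₁₂ - slope₁₃
    exact (mul_eq_zero.mp h).resolve_left (sub_ne_zero_of_ne h₂₃)
  have hb : b = 0 := by linear_combination slope₁₂ - (r₁ + r₂) * ha
  exact ⟨ha, hb, by linear_combination h₁ - r₁ ^ 2 * ha - r₁ * hb⟩

theorem quartic_eq_mul_prod_sub_of_three_roots {R : Type*} [CommRing R] [IsDomain R]
    (p : R → R) {c₄ c₃ c₂ c₁ c₀ r₁ r₂ r₃ r₄ : R}
    (hp : ∀ x, p x = c₄ * x ^ 4 + c₃ * x ^ 3 + c₂ * x ^ 2 + c₁ * x + c₀)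
    (h₁₂ : r₁ ≠ r₂) (h₁₃ : r₁ ≠ r₃) (h₂₃ : r₂ ≠ r₃)
    (h₁ : p r₁ = 0) (h₂ : p r₂ = 0) (h₃ : p r₃ = 0)
    (hsum : c₄ * (r₁ + r₂ + r₃ + r₄) + c₃ = 0) (x : R) :
    p x = c₄ * (x - r₁) * (x - r₂) * (x - r₃) * (x - r₄) := by
  set e₂ := r₁ * r₂ + r₁ * r₃ + r₁ * r₄ + r₂ * r₃ + r₂ * r₄ + r₃ * r₄
  set e₃ := r₁ * r₂ * r₃ + r₁ * r₂ * r₄ + r₁ * r₃ * r₄ + r₂ * r₃ * r₄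
  have remainder (y : R) :
      p y - c₄ * (y - r₁) * (y - r₂) * (y - r₃) * (y - r₄)
        = (c₂ - c₄ * e₂) * y ^ 2 + (c₁ + c₄ * e₃) * y
          + (c₀ - c₄ * (r₁ * r₂ * r₃ * r₄)) := by
    rw [hp]
    linear_combination y ^ 3 * hsum
  obtain ⟨ha, hb, hc⟩ := quadratic_coeffs_eq_zero_of_three_roots h₁₂ h₁₃ h₂₃
    (by rw [← remainder, h₁]; ring) (by rw [← remainder, h₂]; ring)
    (by rw [← remainder, h₃]; ring)
  linear_combination remainder x + x ^ 2 * ha + x * hb + hc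

/-- The fourth intersection point `(x₄, y₄)` of the quartic elliptic curve `y² = f(x)`
with the interpolating parabola `y = V(x)` lies on the curve. -/
theorem stmt1 (α β a1 a2 a3 x1 x2 x3 y1 y2 y3 b0 b1 b2 x4 y4 : ℝ)
    (f V : ℝ → ℝ)
    (hf : ∀ x, f x = α * x ^ 4 + β * x ^ 3 + a1 * x ^ 2 + a2 * x + a3)
    (hV : ∀ x, V x = b2 * x ^ 2 + b1 * x + b0)
    (h12 : x1 ≠ x2) (h13 : x1 ≠ x3) (h23 : x2 ≠ x3)
    (hy1 : y1 ^ 2 = f x1) (hy2 : y2 ^ 2 = f x2) (hy3 : y3 ^ 2 = f x3)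
    (hV1 : V x1 = y1) (hV2 : V x2 = y2) (hV3 : V x3 = y3)
    (hα : α ≠ b2 ^ 2)
    (hx4 : x4 = -x1 - x2 - x3 - (β - 2 * b1 * b2) / (α - b2 ^ 2))
    (hy4 : y4 = -V x4) :
    y4 ^ 2 = f x4 := by
  have hsum : (b2 ^ 2 - α) * (x1 + x2 + x3 + x4) + (2 * b1 * b2 - β) = 0 := by
    rw [hx4]
    field_simp [sub_ne_zero_of_ne hα]
    ring
  have hfactor := quartic_eq_mul_prod_sub_of_three_roots (fun x => V x ^ 2 - f x)
    (c₂ := 2 * b0 * b2 + b1 ^ 2 - a1) (c₁ := 2 * b0 * b1 - a2) (c₀ := b0 ^ 2 - a3)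
    (fun x => by simp only [hV, hf]; ring) h12 h13 h23
    (by simp only [hV1, hy1, sub_self]) (by simp only [hV2, hy2, sub_self])
    (by simp only [hV3, hy3, sub_self]) hsum x4
  rw [sub_self, mul_zero] at hfactor
  rw [hy4, neg_sq]
  linear_combination hfactor
end

section
/- On the phase space $T^*\mathbb{R}^3$ with canonical coordinates $(u_1,u_2,u_3,p_{u_1},p_{u_2},p_{u_3})$ and canonical Poisson bracket, define for pairwise distinct $u_1,u_2,u_3$ the functions $I_1 = \sum_{cyc} \frac{p_{u_1}^2}{(u_1-u_3)(u_1-u_2)} - (u_1^2+u_2^2+u_3^2+u_1u_2+u_1u_3+u_2u_3)\alpha - (u_1+u_2+u_3)\beta$, $I_2 = -\sum_{cyc} \frac{(u_2+u_3)p_{u_1}^2}{(u_1-u_3)(u_1-u_2)} + (u_1+u_2)(u_1+u_3)(u_2+u_3)\alpha + (u_1u_2+u_1u_3+u_2u_3)\beta$, $I_3 = \sum_{cyc} \frac{u_2 u_3 p_{u_1}^2}{(u_1-u_3)(u_1-u_2)} - u_1u_2u_3(u_1+u_2+u_3)\alpha - u_1u_2u_3\beta$ (cyclic sums over permutations of the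 three indices with appropriate signs as in Vandermonde denominators). Then $\{I_1, I_2\} = \{I_1, I_3\} = \{I_2, I_3\} = 0$. -/
/-- Canonical Poisson bracket on `T*ℝ³` of two functions of `(u₁,u₂,u₃,p₁,p₂,p₃)`. -/
noncomputable def pb (F G : ℝ → ℝ → ℝ → ℝ → ℝ → ℝ → ℝ)
    (u1 u2 u3 p1 p2 p3 : ℝ) : ℝ :=
    deriv (fun t => F t u2 u3 p1 p2 p3) u1 * deriv (fun t => G u1 u2 u3 t p2 p3) p1
  - deriv (fun t => F u1 u2 u3 t p2 p3) p1 * deriv (fun t => G t u2 u3 p1 p2 p3) u1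
  + deriv (fun t => F u1 t u3 p1 p2 p3) u2 * deriv (fun t => G u1 u2 u3 p1 t p3) p2
  - deriv (fun t => F u1 u2 u3 p1 t p3) p2 * deriv (fun t => G u1 t u3 p1 p2 p3) u2
  + deriv (fun t => F u1 u2 t p1 p2 p3) u3 * deriv (fun t => G u1 u2 u3 p1 p2 t) p3
  - deriv (fun t => F u1 u2 u3 p1 p2 t) p3 * deriv (fun t => G u1 u2 t p1 p2 p3) u3

/-- The Stäckel integral `I₁` (the Hamiltonian). -/
noncomputable def I1 (α β : ℝ) : ℝ → ℝ → ℝ → ℝ → ℝ → ℝ → ℝ :=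
  fun u1 u2 u3 p1 p2 p3 =>
    p1 ^ 2 / ((u1 - u3) * (u1 - u2)) + p2 ^ 2 / ((u2 - u3) * (u2 - u1))
      + p3 ^ 2 / ((u3 - u1) * (u3 - u2))
      - (u1 ^ 2 + u2 ^ 2 + u3 ^ 2 + u1 * u2 + u1 * u3 + u2 * u3) * α
      - (u1 + u2 + u3) * β

/-- The Stäckel integral `I₂`. -/
noncomputable def I2 (α β : ℝ) : ℝ → ℝ → ℝ → ℝ → ℝ → ℝ → ℝ :=
  fun u1 u2 u3 p1 p2 p3 =>
    -((u2 + u3) * p1 ^ 2) / ((u1 - u3) * (u1 - u2))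
      - ((u1 + u3) * p2 ^ 2) / ((u2 - u3) * (u2 - u1))
      - ((u1 + u2) * p3 ^ 2) / ((u3 - u1) * (u3 - u2))
      + (u1 + u2) * (u1 + u3) * (u2 + u3) * α
      + (u1 * u2 + u1 * u3 + u2 * u3) * β

/-- The Stäckel integral `I₃`. -/
noncomputable def I3 (α β : ℝ) : ℝ → ℝ → ℝ → ℝ → ℝ → ℝ → ℝ :=
  fun u1 u2 u3 p1 p2 p3 =>
    u2 * u3 * p1 ^ 2 / ((u1 - u3) * (u1 - u2))
      + u1 * u3 * p2 ^ 2 / ((u2 - u3) * (u2 - u1))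
      + u1 * u2 * p3 ^ 2 / ((u3 - u1) * (u3 - u2))
      - u1 * u2 * u3 * (u1 + u2 + u3) * α - u1 * u2 * u3 * β

/-- Leading coefficient of the Lagrange interpolation parabola through `(uᵢ, pᵢ)`. -/
noncomputable def b2f : ℝ → ℝ → ℝ → ℝ → ℝ → ℝ → ℝ :=
  fun u1 u2 u3 p1 p2 p3 =>
    ((u2 - u3) * p1 + (u3 - u1) * p2 + (u1 - u2) * p3)
      / ((u1 - u2) * (u1 - u3) * (u2 - u3))

/-- Middle coefficient of the Lagrange interpolation parabola through `(uᵢ, pᵢ)`. -/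
noncomputable def b1f : ℝ → ℝ → ℝ → ℝ → ℝ → ℝ → ℝ :=
  fun u1 u2 u3 p1 p2 p3 =>
    -(((u2 ^ 2 - u3 ^ 2) * p1 - (u3 ^ 2 - u1 ^ 2) * p2 - (u1 ^ 2 - u2 ^ 2) * p3)
      / ((u1 - u2) * (u1 - u3) * (u2 - u3)))

/-- Constant coefficient of the Lagrange interpolation parabola through `(uᵢ, pᵢ)`. -/
noncomputable def b0f : ℝ → ℝ → ℝ → ℝ → ℝ → ℝ → ℝ :=
  fun u1 u2 u3 p1 p2 p3 =>
    (u2 * u3 * (u2 - u3) * p1 + u1 * u3 * (u3 - u1) * p2 + u1 * u2 * (u1 - u2) * p3)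
      / ((u1 - u2) * (u1 - u3) * (u2 - u3))

/-- Abscissa of the reduced divisor. -/
noncomputable def x4f (α β : ℝ) : ℝ → ℝ → ℝ → ℝ → ℝ → ℝ → ℝ :=
  fun u1 u2 u3 p1 p2 p3 =>
    -u1 - u2 - u3 - (β - 2 * b1f u1 u2 u3 p1 p2 p3 * b2f u1 u2 u3 p1 p2 p3)
      / (α - (b2f u1 u2 u3 p1 p2 p3) ^ 2)

/-- Ordinate of the reduced divisor. -/
noncomputable def y4f (α β : ℝ) : ℝ → ℝ → ℝ → ℝ → ℝ → ℝ → ℝ :=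
  fun u1 u2 u3 p1 p2 p3 =>
    -(b2f u1 u2 u3 p1 p2 p3 * (x4f α β u1 u2 u3 p1 p2 p3) ^ 2
      + b1f u1 u2 u3 p1 p2 p3 * x4f α β u1 u2 u3 p1 p2 p3 + b0f u1 u2 u3 p1 p2 p3)

/-- Derivative of a rational function (quadratic over cubic) plus a quadratic. -/
lemma key (n2 n1 n0 d3 d2 d1 d0 c2 c1 c0 x : ℝ)
    (hD : d3*x^3 + d2*x^2 + d1*x + d0 ≠ 0) :
    deriv (fun t : ℝ => (n2*t^2 + n1*t + n0)/(d3*t^3 + d2*t^2 + d1*t + d0)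
        + (c2*t^2 + c1*t + c0)) x
      = ((2*n2*x + n1)*(d3*x^3 + d2*x^2 + d1*x + d0)
          - (n2*x^2 + n1*x + n0)*(3*d3*x^2 + 2*d2*x + d1))
          / (d3*x^3 + d2*x^2 + d1*x + d0)^2
        + (2*c2*x + c1) := by
  have hN : HasDerivAt (fun t : ℝ => n2*t^2 + n1*t + n0) (2*n2*x + n1) x := by
    have h := (((hasDerivAt_pow 2 x).const_mul n2).add
      ((hasDerivAt_id x).const_mul n1)).add_const n0
    refine h.congr_deriv ?_
    push_cast; ring
  have hDD : HasDerivAt (fun t : ℝ => d3*t^3 + d2*t^2 + d1*t + d0)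
      (3*d3*x^2 + 2*d2*x + d1) x := by
    have h := ((((hasDerivAt_pow 3 x).const_mul d3).add
      ((hasDerivAt_pow 2 x).const_mul d2)).add
      ((hasDerivAt_id x).const_mul d1)).add_const d0
    refine h.congr_deriv ?_
    push_cast; ring
  have hP : HasDerivAt (fun t : ℝ => c2*t^2 + c1*t + c0) (2*c2*x + c1) x := by
    have h := (((hasDerivAt_pow 2 x).const_mul c2).add
      ((hasDerivAt_id x).const_mul c1)).add_const c0
    refine h.congr_deriv ?_
    push_cast; ring
  exact ((hN.div hDD hD).add hP).deriv

lemma dp (c K x : ℝ) : deriv (fun t : ℝ => c*t^2 + K) x = 2*c*x := by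
  have h : HasDerivAt (fun t : ℝ => c*t^2 + K) (2*c*x) x := by
    have h := ((hasDerivAt_pow 2 x).const_mul c).add_const K
    refine h.congr_deriv ?_
    push_cast; ring
  exact h.deriv
set_option maxHeartbeats 2000000 in
lemma dI1 (α β a b q1 q2 q3 x : ℝ) (h2 : x ≠ a) (h3 : x ≠ b) (hab : a ≠ b) :
    deriv (fun t => I1 α β t a b q1 q2 q3) x
      = ((2*(0:ℝ)*x + (q3^2 - q2^2))*((x-a)*((x-b)*(a-b))) - ((0:ℝ)*x^2 + (q3^2 - q2^2)*x + (q2^2*b - q3^2*a + q1^2*(a-b)))*(3*(0:ℝ)*x^2 + 2*(a-b)*x + (-(a+b)*(a-b)))) / ((x-a)*((x-b)*(a-b)))^2 + (2*(-α)*x + (-(a+b)*α - β)) := by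
  have hD : ((0:ℝ)*x^3 + (a-b)*x^2 + (-(a+b)*(a-b))*x + (a*b*(a-b))) ≠ 0 := by
    have h : ((0:ℝ)*x^3 + (a-b)*x^2 + (-(a+b)*(a-b))*x + (a*b*(a-b))) = (a-b)*((x-a)*(x-b)) := by ring
    rw [h]
    exact mul_ne_zero (sub_ne_zero.mpr hab)
      (mul_ne_zero (sub_ne_zero.mpr h2) (sub_ne_zero.mpr h3))
  have hE : (fun t => I1 α β t a b q1 q2 q3) =ᶠ[nhds x]
      (fun t : ℝ => ((0:ℝ)*t^2 + (q3^2 - q2^2)*t + (q2^2*b - q3^2*a + q1^2*(a-b)))/((0:ℝ)*t^3 + (a-b)*t^2 + (-(a+b)*(a-b))*t + (a*b*(a-b))) + ((-α)*t^2 + (-(a+b)*α - β)*t + (-(a^2+b^2+a*b)*α - (a+b)*β))) := by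
    filter_upwards [eventually_ne_nhds h2, eventually_ne_nhds h3] with t ht2 ht3
    have ha1 : t - a ≠ 0 := sub_ne_zero.mpr ht2
    have ha2 : a - t ≠ 0 := sub_ne_zero.mpr ht2.symm
    have hb1 : t - b ≠ 0 := sub_ne_zero.mpr ht3
    have hb2 : b - t ≠ 0 := sub_ne_zero.mpr ht3.symm
    have hab1 : a - b ≠ 0 := sub_ne_zero.mpr hab
    have hab2 : b - a ≠ 0 := sub_ne_zero.mpr hab.symm
    simp only [I1]
    rw [show ((0:ℝ)*t^3 + (a-b)*t^2 + (-(a+b)*(a-b))*t + (a*b*(a-b))) = (t-a)*((t-b)*(a-b)) from by ring]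
    field_simp
    ring
  rw [hE.deriv_eq, key _ _ _ _ _ _ _ _ _ _ x hD,
    show ((0:ℝ)*x^3 + (a-b)*x^2 + (-(a+b)*(a-b))*x + (a*b*(a-b))) = ((x-a)*((x-b)*(a-b))) from by ring]

set_option maxHeartbeats 2000000 in
lemma dI2 (α β a b q1 q2 q3 x : ℝ) (h2 : x ≠ a) (h3 : x ≠ b) (hab : a ≠ b) :
    deriv (fun t => I2 α β t a b q1 q2 q3) x
      = ((2*(q2^2 - q3^2)*x + (0:ℝ))*((x-a)*((x-b)*(a-b))) - ((q2^2 - q3^2)*x^2 + (0:ℝ)*x + (a^2*q3^2 - b^2*q2^2 - (a^2-b^2)*q1^2))*(3*(0:ℝ)*x^2 + 2*(a-b)*x + (-(a+b)*(a-b)))) / ((x-a)*((x-b)*(a-b)))^2 + (2*((a+b)*α)*x + ((a+b)^2*α + (a+b)*β)) := by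
  have hD : ((0:ℝ)*x^3 + (a-b)*x^2 + (-(a+b)*(a-b))*x + (a*b*(a-b))) ≠ 0 := by
    have h : ((0:ℝ)*x^3 + (a-b)*x^2 + (-(a+b)*(a-b))*x + (a*b*(a-b))) = (a-b)*((x-a)*(x-b)) := by ring
    rw [h]
    exact mul_ne_zero (sub_ne_zero.mpr hab)
      (mul_ne_zero (sub_ne_zero.mpr h2) (sub_ne_zero.mpr h3))
  have hE : (fun t => I2 α β t a b q1 q2 q3) =ᶠ[nhds x]
      (fun t : ℝ => ((q2^2 - q3^2)*t^2 + (0:ℝ)*t + (a^2*q3^2 - b^2*q2^2 - (a^2-b^2)*q1^2))/((0:ℝ)*t^3 + (a-b)*t^2 + (-(a+b)*(a-b))*t + (a*b*(a-b))) + (((a+b)*α)*t^2 + ((a+b)^2*α + (a+b)*β)*t + (a*b*(a+b)*α + a*b*β))) := by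
    filter_upwards [eventually_ne_nhds h2, eventually_ne_nhds h3] with t ht2 ht3
    have ha1 : t - a ≠ 0 := sub_ne_zero.mpr ht2
    have ha2 : a - t ≠ 0 := sub_ne_zero.mpr ht2.symm
    have hb1 : t - b ≠ 0 := sub_ne_zero.mpr ht3
    have hb2 : b - t ≠ 0 := sub_ne_zero.mpr ht3.symm
    have hab1 : a - b ≠ 0 := sub_ne_zero.mpr hab
    have hab2 : b - a ≠ 0 := sub_ne_zero.mpr hab.symm
    simp only [I2]
    rw [show ((0:ℝ)*t^3 + (a-b)*t^2 + (-(a+b)*(a-b))*t + (a*b*(a-b))) = (t-a)*((t-b)*(a-b)) from by ring]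
    field_simp
    ring
  rw [hE.deriv_eq, key _ _ _ _ _ _ _ _ _ _ x hD,
    show ((0:ℝ)*x^3 + (a-b)*x^2 + (-(a+b)*(a-b))*x + (a*b*(a-b))) = ((x-a)*((x-b)*(a-b))) from by ring]

set_option maxHeartbeats 2000000 in
lemma dI3 (α β a b q1 q2 q3 x : ℝ) (h2 : x ≠ a) (h3 : x ≠ b) (hab : a ≠ b) :
    deriv (fun t => I3 α β t a b q1 q2 q3) x
      = ((2*(a*q3^2 - b*q2^2)*x + (b^2*q2^2 - a^2*q3^2))*((x-a)*((x-b)*(a-b))) - ((a*q3^2 - b*q2^2)*x^2 + (b^2*q2^2 - a^2*q3^2)*x + (a*b*(a-b)*q1^2))*(3*(0:ℝ)*x^2 + 2*(a-b)*x + (-(a+b)*(a-b)))) / ((x-a)*((x-b)*(a-b)))^2 + (2*(-(a*b)*α)*x + (-(a*b)*(a+b)*α - a*b*β)) := by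
  have hD : ((0:ℝ)*x^3 + (a-b)*x^2 + (-(a+b)*(a-b))*x + (a*b*(a-b))) ≠ 0 := by
    have h : ((0:ℝ)*x^3 + (a-b)*x^2 + (-(a+b)*(a-b))*x + (a*b*(a-b))) = (a-b)*((x-a)*(x-b)) := by ring
    rw [h]
    exact mul_ne_zero (sub_ne_zero.mpr hab)
      (mul_ne_zero (sub_ne_zero.mpr h2) (sub_ne_zero.mpr h3))
  have hE : (fun t => I3 α β t a b q1 q2 q3) =ᶠ[nhds x]
      (fun t : ℝ => ((a*q3^2 - b*q2^2)*t^2 + (b^2*q2^2 - a^2*q3^2)*t + (a*b*(a-b)*q1^2))/((0:ℝ)*t^3 + (a-b)*t^2 + (-(a+b)*(a-b))*t + (a*b*(a-b))) + ((-(a*b)*α)*t^2 + (-(a*b)*(a+b)*α - a*b*β)*t + (0:ℝ))) := by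
    filter_upwards [eventually_ne_nhds h2, eventually_ne_nhds h3] with t ht2 ht3
    have ha1 : t - a ≠ 0 := sub_ne_zero.mpr ht2
    have ha2 : a - t ≠ 0 := sub_ne_zero.mpr ht2.symm
    have hb1 : t - b ≠ 0 := sub_ne_zero.mpr ht3
    have hb2 : b - t ≠ 0 := sub_ne_zero.mpr ht3.symm
    have hab1 : a - b ≠ 0 := sub_ne_zero.mpr hab
    have hab2 : b - a ≠ 0 := sub_ne_zero.mpr hab.symm
    simp only [I3]
    rw [show ((0:ℝ)*t^3 + (a-b)*t^2 + (-(a+b)*(a-b))*t + (a*b*(a-b))) = (t-a)*((t-b)*(a-b)) from by ring]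
    field_simp
    ring
  rw [hE.deriv_eq, key _ _ _ _ _ _ _ _ _ _ x hD,
    show ((0:ℝ)*x^3 + (a-b)*x^2 + (-(a+b)*(a-b))*x + (a*b*(a-b))) = ((x-a)*((x-b)*(a-b))) from by ring]

lemma comb (V A1 B1 c1 d1 m1 n1 A2 B2 c2 d2 m2 n2 A3 B3 c3 d3 m3 n3 : ℝ) (hV : V ≠ 0)
    (hX : A1*n1 - m1*B1 + (A2*n2 - m2*B2) + (A3*n3 - m3*B3) = 0)
    (hY : c1*n1 - m1*d1 + (c2*n2 - m2*d2) + (c3*n3 - m3*d3) = 0) :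
    (A1/V^2 + c1) * (n1/V) - m1/V * (B1/V^2 + d1) + (A2/V^2 + c2) * (n2/V)
      - m2/V * (B2/V^2 + d2) + (A3/V^2 + c3) * (n3/V) - m3/V * (B3/V^2 + d3) = 0 := by
  have h : (A1/V^2 + c1) * (n1/V) - m1/V * (B1/V^2 + d1) + (A2/V^2 + c2) * (n2/V)
      - m2/V * (B2/V^2 + d2) + (A3/V^2 + c3) * (n3/V) - m3/V * (B3/V^2 + d3)
      = (A1*n1 - m1*B1 + (A2*n2 - m2*B2) + (A3*n3 - m3*B3))/V^3
        + (c1*n1 - m1*d1 + (c2*n2 - m2*d2) + (c3*n3 - m3*d3))/V := by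
    field_simp
    ring
  rw [h, hX, hY]
  simp

set_option maxHeartbeats 4000000 in
/-- The Stäckel integrals `I₁, I₂, I₃` of the system on the quartic elliptic curve
Poisson-commute pairwise. -/
theorem stmt2 (α β u1 u2 u3 p1 p2 p3 : ℝ)
    (h12 : u1 ≠ u2) (h13 : u1 ≠ u3) (h23 : u2 ≠ u3) :
    pb (I1 α β) (I2 α β) u1 u2 u3 p1 p2 p3 = 0 ∧
    pb (I1 α β) (I3 α β) u1 u2 u3 p1 p2 p3 = 0 ∧
    pb (I2 α β) (I3 α β) u1 u2 u3 p1 p2 p3 = 0 := by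
  have s12 : u1 - u2 ≠ 0 := sub_ne_zero.mpr h12
  have s13 : u1 - u3 ≠ 0 := sub_ne_zero.mpr h13
  have s21 : u2 - u1 ≠ 0 := sub_ne_zero.mpr h12.symm
  have s31 : u3 - u1 ≠ 0 := sub_ne_zero.mpr h13.symm
  have s32 : u3 - u2 ≠ 0 := sub_ne_zero.mpr h23.symm
  have s23 : u2 - u3 ≠ 0 := sub_ne_zero.mpr h23
  have hV : ((u1-u2)*((u1-u3)*(u2-u3))) ≠ 0 := mul_ne_zero s12 (mul_ne_zero s13 s23)
  have d1u1 := dI1 α β u2 u3 p1 p2 p3 u1 h12 h13 h23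
  have d1u2 : deriv (fun t => I1 α β u1 t u3 p1 p2 p3) u2
      = ((2*(0:ℝ)*u2 + (p3^2 - p1^2))*((u2-u1)*((u2-u3)*(u1-u3))) - ((0:ℝ)*u2^2 + (p3^2 - p1^2)*u2 + (p1^2*u3 - p3^2*u1 + p2^2*(u1-u3)))*(3*(0:ℝ)*u2^2 + 2*(u1-u3)*u2 + (-(u1+u3)*(u1-u3)))) / ((u1-u2)*((u1-u3)*(u2-u3)))^2 + (2*(-α)*u2 + (-(u1+u3)*α - β)) := by
    rw [show (fun t => I1 α β u1 t u3 p1 p2 p3) = (fun t => I1 α β t u1 u3 p2 p1 p3)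
        from by funext t; simp only [I1]; ring,
      dI1 α β u1 u3 p2 p1 p3 u2 h12.symm h23 h13,
      show ((u2-u1)*((u2-u3)*(u1-u3)))^2 = ((u1-u2)*((u1-u3)*(u2-u3)))^2 from by ring]
  have d1u3 : deriv (fun t => I1 α β u1 u2 t p1 p2 p3) u3
      = ((2*(0:ℝ)*u3 + (p2^2 - p1^2))*((u3-u1)*((u3-u2)*(u1-u2))) - ((0:ℝ)*u3^2 + (p2^2 - p1^2)*u3 + (p1^2*u2 - p2^2*u1 + p3^2*(u1-u2)))*(3*(0:ℝ)*u3^2 + 2*(u1-u2)*u3 + (-(u1+u2)*(u1-u2)))) / ((u1-u2)*((u1-u3)*(u2-u3)))^2 + (2*(-α)*u3 + (-(u1+u2)*α - β)) := by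
    rw [show (fun t => I1 α β u1 u2 t p1 p2 p3) = (fun t => I1 α β t u1 u2 p3 p1 p2)
        from by funext t; simp only [I1]; ring,
      dI1 α β u1 u2 p3 p1 p2 u3 h13.symm h23.symm h12,
      show ((u3-u1)*((u3-u2)*(u1-u2)))^2 = ((u1-u2)*((u1-u3)*(u2-u3)))^2 from by ring]
  have d1p1 : deriv (fun t => I1 α β u1 u2 u3 t p2 p3) p1 = (2*(u2-u3)*p1) / ((u1-u2)*((u1-u3)*(u2-u3))) := by
    rw [show (fun t => I1 α β u1 u2 u3 t p2 p3) = (fun t : ℝ => (1/((u1-u3)*(u1-u2)))*t^2 + (I1 α β u1 u2 u3 0 p2 p3)) from by funext t; simp only [I1]; ring,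
      dp, eq_div_iff hV]
    field_simp
  have d1p2 : deriv (fun t => I1 α β u1 u2 u3 p1 t p3) p2 = (-2*(u1-u3)*p2) / ((u1-u2)*((u1-u3)*(u2-u3))) := by
    rw [show (fun t => I1 α β u1 u2 u3 p1 t p3) = (fun t : ℝ => (1/((u2-u3)*(u2-u1)))*t^2 + (I1 α β u1 u2 u3 p1 0 p3)) from by funext t; simp only [I1]; ring,
      dp, eq_div_iff hV]
    field_simp
    ring
  have d1p3 : deriv (fun t => I1 α β u1 u2 u3 p1 p2 t) p3 = (2*(u1-u2)*p3) / ((u1-u2)*((u1-u3)*(u2-u3))) := by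
    rw [show (fun t => I1 α β u1 u2 u3 p1 p2 t) = (fun t : ℝ => (1/((u3-u1)*(u3-u2)))*t^2 + (I1 α β u1 u2 u3 p1 p2 0)) from by funext t; simp only [I1]; ring,
      dp, eq_div_iff hV]
    field_simp
    ring
  have d2u1 := dI2 α β u2 u3 p1 p2 p3 u1 h12 h13 h23
  have d2u2 : deriv (fun t => I2 α β u1 t u3 p1 p2 p3) u2
      = ((2*(p1^2 - p3^2)*u2 + (0:ℝ))*((u2-u1)*((u2-u3)*(u1-u3))) - ((p1^2 - p3^2)*u2^2 + (0:ℝ)*u2 + (u1^2*p3^2 - u3^2*p1^2 - (u1^2-u3^2)*p2^2))*(3*(0:ℝ)*u2^2 + 2*(u1-u3)*u2 + (-(u1+u3)*(u1-u3)))) / ((u1-u2)*((u1-u3)*(u2-u3)))^2 + (2*((u1+u3)*α)*u2 + ((u1+u3)^2*α + (u1+u3)*β)) := by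
    rw [show (fun t => I2 α β u1 t u3 p1 p2 p3) = (fun t => I2 α β t u1 u3 p2 p1 p3)
        from by funext t; simp only [I2]; ring,
      dI2 α β u1 u3 p2 p1 p3 u2 h12.symm h23 h13,
      show ((u2-u1)*((u2-u3)*(u1-u3)))^2 = ((u1-u2)*((u1-u3)*(u2-u3)))^2 from by ring]
  have d2u3 : deriv (fun t => I2 α β u1 u2 t p1 p2 p3) u3
      = ((2*(p1^2 - p2^2)*u3 + (0:ℝ))*((u3-u1)*((u3-u2)*(u1-u2))) - ((p1^2 - p2^2)*u3^2 + (0:ℝ)*u3 + (u1^2*p2^2 - u2^2*p1^2 - (u1^2-u2^2)*p3^2))*(3*(0:ℝ)*u3^2 + 2*(u1-u2)*u3 + (-(u1+u2)*(u1-u2)))) / ((u1-u2)*((u1-u3)*(u2-u3)))^2 + (2*((u1+u2)*α)*u3 + ((u1+u2)^2*α + (u1+u2)*β)) := by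
    rw [show (fun t => I2 α β u1 u2 t p1 p2 p3) = (fun t => I2 α β t u1 u2 p3 p1 p2)
        from by funext t; simp only [I2]; ring,
      dI2 α β u1 u2 p3 p1 p2 u3 h13.symm h23.symm h12,
      show ((u3-u1)*((u3-u2)*(u1-u2)))^2 = ((u1-u2)*((u1-u3)*(u2-u3)))^2 from by ring]
  have d2p1 : deriv (fun t => I2 α β u1 u2 u3 t p2 p3) p1 = (-2*(u2+u3)*(u2-u3)*p1) / ((u1-u2)*((u1-u3)*(u2-u3))) := by
    rw [show (fun t => I2 α β u1 u2 u3 t p2 p3) = (fun t : ℝ => (-(u2+u3)/((u1-u3)*(u1-u2)))*t^2 + (I2 α β u1 u2 u3 0 p2 p3)) from by funext t; simp only [I2]; ring,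
      dp, eq_div_iff hV]
    field_simp
  have d2p2 : deriv (fun t => I2 α β u1 u2 u3 p1 t p3) p2 = (2*(u1+u3)*(u1-u3)*p2) / ((u1-u2)*((u1-u3)*(u2-u3))) := by
    rw [show (fun t => I2 α β u1 u2 u3 p1 t p3) = (fun t : ℝ => (-(u1+u3)/((u2-u3)*(u2-u1)))*t^2 + (I2 α β u1 u2 u3 p1 0 p3)) from by funext t; simp only [I2]; ring,
      dp, eq_div_iff hV]
    field_simp
    ring
  have d2p3 : deriv (fun t => I2 α β u1 u2 u3 p1 p2 t) p3 = (-2*(u1+u2)*(u1-u2)*p3) / ((u1-u2)*((u1-u3)*(u2-u3))) := by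
    rw [show (fun t => I2 α β u1 u2 u3 p1 p2 t) = (fun t : ℝ => (-(u1+u2)/((u3-u1)*(u3-u2)))*t^2 + (I2 α β u1 u2 u3 p1 p2 0)) from by funext t; simp only [I2]; ring,
      dp, eq_div_iff hV]
    field_simp
    ring
  have d3u1 := dI3 α β u2 u3 p1 p2 p3 u1 h12 h13 h23
  have d3u2 : deriv (fun t => I3 α β u1 t u3 p1 p2 p3) u2
      = ((2*(u1*p3^2 - u3*p1^2)*u2 + (u3^2*p1^2 - u1^2*p3^2))*((u2-u1)*((u2-u3)*(u1-u3))) - ((u1*p3^2 - u3*p1^2)*u2^2 + (u3^2*p1^2 - u1^2*p3^2)*u2 + (u1*u3*(u1-u3)*p2^2))*(3*(0:ℝ)*u2^2 + 2*(u1-u3)*u2 + (-(u1+u3)*(u1-u3)))) / ((u1-u2)*((u1-u3)*(u2-u3)))^2 + (2*(-(u1*u3)*α)*u2 + (-(u1*u3)*(u1+u3)*α - u1*u3*β)) := by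
    rw [show (fun t => I3 α β u1 t u3 p1 p2 p3) = (fun t => I3 α β t u1 u3 p2 p1 p3)
        from by funext t; simp only [I3]; ring,
      dI3 α β u1 u3 p2 p1 p3 u2 h12.symm h23 h13,
      show ((u2-u1)*((u2-u3)*(u1-u3)))^2 = ((u1-u2)*((u1-u3)*(u2-u3)))^2 from by ring]
  have d3u3 : deriv (fun t => I3 α β u1 u2 t p1 p2 p3) u3
      = ((2*(u1*p2^2 - u2*p1^2)*u3 + (u2^2*p1^2 - u1^2*p2^2))*((u3-u1)*((u3-u2)*(u1-u2))) - ((u1*p2^2 - u2*p1^2)*u3^2 + (u2^2*p1^2 - u1^2*p2^2)*u3 + (u1*u2*(u1-u2)*p3^2))*(3*(0:ℝ)*u3^2 + 2*(u1-u2)*u3 + (-(u1+u2)*(u1-u2)))) / ((u1-u2)*((u1-u3)*(u2-u3)))^2 + (2*(-(u1*u2)*α)*u3 + (-(u1*u2)*(u1+u2)*α - u1*u2*β)) := by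
    rw [show (fun t => I3 α β u1 u2 t p1 p2 p3) = (fun t => I3 α β t u1 u2 p3 p1 p2)
        from by funext t; simp only [I3]; ring,
      dI3 α β u1 u2 p3 p1 p2 u3 h13.symm h23.symm h12,
      show ((u3-u1)*((u3-u2)*(u1-u2)))^2 = ((u1-u2)*((u1-u3)*(u2-u3)))^2 from by ring]
  have d3p1 : deriv (fun t => I3 α β u1 u2 u3 t p2 p3) p1 = (2*u2*u3*(u2-u3)*p1) / ((u1-u2)*((u1-u3)*(u2-u3))) := by
    rw [show (fun t => I3 α β u1 u2 u3 t p2 p3) = (fun t : ℝ => (u2*u3/((u1-u3)*(u1-u2)))*t^2 + (I3 α β u1 u2 u3 0 p2 p3)) from by funext t; simp only [I3]; ring,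
      dp, eq_div_iff hV]
    field_simp
  have d3p2 : deriv (fun t => I3 α β u1 u2 u3 p1 t p3) p2 = (-2*u1*u3*(u1-u3)*p2) / ((u1-u2)*((u1-u3)*(u2-u3))) := by
    rw [show (fun t => I3 α β u1 u2 u3 p1 t p3) = (fun t : ℝ => (u1*u3/((u2-u3)*(u2-u1)))*t^2 + (I3 α β u1 u2 u3 p1 0 p3)) from by funext t; simp only [I3]; ring,
      dp, eq_div_iff hV]
    field_simp
    ring
  have d3p3 : deriv (fun t => I3 α β u1 u2 u3 p1 p2 t) p3 = (2*u1*u2*(u1-u2)*p3) / ((u1-u2)*((u1-u3)*(u2-u3))) := by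
    rw [show (fun t => I3 α β u1 u2 u3 p1 p2 t) = (fun t : ℝ => (u1*u2/((u3-u1)*(u3-u2)))*t^2 + (I3 α β u1 u2 u3 p1 p2 0)) from by funext t; simp only [I3]; ring,
      dp, eq_div_iff hV]
    field_simp
    ring
  refine ⟨?_, ?_, ?_⟩
  · simp only [pb]
    rw [d1u1, d1u2, d1u3, d1p1, d1p2, d1p3, d2u1, d2u2, d2u3, d2p1, d2p2, d2p3]
    exact comb _ _ _ _ _ _ _ _ _ _ _ _ _ _ _ _ _ _ _ hV (by ring) (by ring)
  · simp only [pb]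
    rw [d1u1, d1u2, d1u3, d1p1, d1p2, d1p3, d3u1, d3u2, d3u3, d3p1, d3p2, d3p3]
    exact comb _ _ _ _ _ _ _ _ _ _ _ _ _ _ _ _ _ _ _ hV (by ring) (by ring)
  · simp only [pb]
    rw [d2u1, d2u2, d2u3, d2p1, d2p2, d2p3, d3u1, d3u2, d3u3, d3p1, d3p2, d3p3]
    exact comb _ _ _ _ _ _ _ _ _ _ _ _ _ _ _ _ _ _ _ hV (by ring) (by ring)
end

section
/- Let $f(x)$ be a polynomial of degree at most $2g+2$ and let $U, V$ be polynomials with $U$ monic, $\deg V < \deg U$, and $U \mid (f - V^2)$. Set $U' = (f - V^2)/U$ and $V' = -V \bmod U'$. Then $U' \mid (f - V'^2)$, i.e. one step of Cantor's reduction algorithm preserves the invariant that the pair $(U', V')$ represents a divisor on the hyperelliptic curve $y^2 = f(x)$. -/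
theorem dvd_sub_sq_neg_mod {R : Type*} [EuclideanDomain R] {f V W : R} (h : W ∣ f - V ^ 2) :
    W ∣ f - (-V % W) ^ 2 := by
  obtain ⟨c, hc⟩ := h
  -- with q = -V / W we have -V % W = -V - W q, whose square is V ^ 2 + W (2 V q + W q ^ 2)
  refine ⟨c - 2 * V * (-V / W) - W * (-V / W) ^ 2, ?_⟩
  rw [EuclideanDomain.mod_eq_sub_mul_div]
  linear_combination hc

theorem stmt7_general {k : Type*} [Field k] (f U V : Polynomial k)
    (hdvd : U ∣ f - V ^ 2) :
    (f - V ^ 2) / U ∣ f - (-V % ((f - V ^ 2) / U)) ^ 2 :=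
  dvd_sub_sq_neg_mod (EuclideanDomain.div_dvd_of_dvd hdvd)

/-- One step of Cantor's reduction algorithm (with `h = 0`) preserves the Mumford
invariant: if `U ∣ f - V²`, `U' = (f - V²)/U` and `V' = -V mod U'`, then `U' ∣ f - V'²`. -/
theorem stmt7 {k : Type*} [Field k] [CharZero k] (g : ℕ) (f U V : Polynomial k)
    (hf : f.natDegree ≤ 2 * g + 2) (hU : U.Monic) (hV : V.natDegree < U.natDegree)
    (hdvd : U ∣ f - V ^ 2) :
    (f - V ^ 2) / U ∣ f - (-V % ((f - V ^ 2) / U)) ^ 2 :=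
  stmt7_general f U V hdvd
end

section
/- Let $f(x)$ be a polynomial of degree $2g+2$ with $g \ge 1$ and let $(x_i, y_i)$, $i = 1, \dots, g+2$, be points on $y^2 = f(x)$ with pairwise distinct abscissas, and $V$ the Lagrange interpolation polynomial of degree $\le g+1$ through them. If the leading coefficient of $f - V^2$ (in degree $2g+2$) is nonzero, then $U' = (f - V^2)/\prod_{i=1}^{g+2}(x - x_i)$ is a polynomial of degree exactly $g$, and every root $x_0$ of $U'$ gives a point $(x_0, -V(x_0))$ on the curve. In particular, the intersection divisor of the curve $y = V(x)$ with $y^2 = f(x)$ is $\sum_{i=1}^{g+2} P_i + D'$ with $\deg D' = g$. -/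
open Polynomial

/-!
The polynomial `f - V²` vanishes at the `g + 2` distinct abscissas, because
`V(xᵢ)² = yᵢ² = f(xᵢ)`, so it is divisible by `∏ (X - xᵢ)`. Its degree is exactly `2g + 2`
by the assumption on the top coefficient, so the quotient has degree `g`; and a root of the
quotient is a root of `f - V²`, i.e. a point `(x₀, ±V(x₀))` on the curve.
-/

namespace Polynomial

theorem natDegree_sub_sq_eq {R : Type*} [CommRing R] {f V : R[X]} {n : ℕ}
    (hf : f.natDegree ≤ 2 * n) (hV : V.natDegree ≤ n) (htop : (f - V ^ 2).coeff (2 * n) ≠ 0) :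
    (f - V ^ 2).natDegree = 2 * n :=
  natDegree_eq_of_le_of_coeff_ne_zero
    ((natDegree_sub_le _ _).trans (max_le hf (natDegree_pow_le_of_le 2 hV))) htop

variable {k ι : Type*} [Field k] [Fintype ι]

theorem prod_X_sub_C_dvd_of_eval_eq_zero {x : ι → k} (hx : Function.Injective x) {P : k[X]}
    (hP : ∀ i, P.eval (x i) = 0) : ∏ i, (X - C (x i)) ∣ P :=
  Finset.prod_dvd_of_coprime ((pairwise_coprime_X_sub_C hx).set_pairwise _)
    fun i _ => dvd_iff_isRoot.mpr (hP i)

theorem natDegree_div_prod_X_sub_C (P : k[X]) (x : ι → k) :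
    (P / ∏ i, (X - C (x i))).natDegree = P.natDegree - Fintype.card ι := by
  have hmonic : (∏ i, (X - C (x i))).Monic := monic_prod_of_monic _ _ fun i _ => monic_X_sub_C _
  rw [← divByMonic_eq_div P hmonic, natDegree_divByMonic P hmonic,
    natDegree_finsetProd_X_sub_C_eq_card, Finset.card_univ]

end Polynomial

theorem stmt18_general {k : Type*} [Field k] (g : ℕ)
    (f V : Polynomial k) (hfdeg : f.natDegree = 2 * g + 2)
    (x y : Fin (g + 2) → k) (hx : Function.Injective x)
    (hVdeg : V.natDegree ≤ g + 1)
    (hy : ∀ i, (y i) ^ 2 = f.eval (x i))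
    (hV : ∀ i, V.eval (x i) = y i)
    (htop : (f - V ^ 2).coeff (2 * g + 2) ≠ 0) :
    ((f - V ^ 2) / ∏ i, (X - C (x i))).natDegree = g ∧
    ∀ x0 : k, ((f - V ^ 2) / ∏ i, (X - C (x i))).eval x0 = 0 →
      (-(V.eval x0)) ^ 2 = f.eval x0 := by
  have hdeg : (f - V ^ 2).natDegree = 2 * g + 2 :=
    natDegree_sub_sq_eq (n := g + 1) (by omega) hVdeg htop
  have hdvd : ∏ i, (X - C (x i)) ∣ f - V ^ 2 :=
    prod_X_sub_C_dvd_of_eval_eq_zero hx fun i => by simp [hV i, hy i]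
  refine ⟨by rw [natDegree_div_prod_X_sub_C, hdeg, Fintype.card_fin]; omega, fun x0 h0 => ?_⟩
  have hroot : (f - V ^ 2).IsRoot x0 := IsRoot.dvd h0 (EuclideanDomain.div_dvd_of_dvd hdvd)
  rw [neg_sq, eq_comm, ← sub_eq_zero]
  simpa using hroot

/-- Generic single reduction step of Proposition 1: for `g + 2` points on `y² = f(x)`
(`deg f = 2g + 2`) with Lagrange interpolation polynomial `V` of degree ≤ g + 1, if the
top coefficient of `f - V²` is nonzero, then `U' = (f - V²)/∏(x - xᵢ)` has degree
exactly `g`, and every root `x₀` of `U'` gives a point `(x₀, -V(x₀))` on the curve. -/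
theorem stmt18 {k : Type*} [Field k] [CharZero k] (g : ℕ) (hg : 1 ≤ g)
    (f V : Polynomial k) (hfdeg : f.natDegree = 2 * g + 2)
    (x y : Fin (g + 2) → k) (hx : Function.Injective x)
    (hVdeg : V.natDegree ≤ g + 1)
    (hy : ∀ i, (y i) ^ 2 = f.eval (x i))
    (hV : ∀ i, V.eval (x i) = y i)
    (htop : (f - V ^ 2).coeff (2 * g + 2) ≠ 0) :
    ((f - V ^ 2) / ∏ i, (X - C (x i))).natDegree = g ∧
    ∀ x0 : k, ((f - V ^ 2) / ∏ i, (X - C (x i))).eval x0 = 0 →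
      (-(V.eval x0)) ^ 2 = f.eval x0 :=
  stmt18_general g f V hfdeg x y hx hVdeg hy hV htop
end
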